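/- arXiv:2210.11189 — 3 statements merged into one kernel-verified Lean document; each statement's English description precedes it below -/
import Mathlib

section
/- Let q ∈ ℝ³ be orthogonal to k + k₃ and z = α(k+k₃) + q with z ≠ 0 and z ≠ k+k₃. Then ⟨q, ∇C(z)⟩ = |q|² · (Ω'(|z|)/|z| + Ω'(|k+k₃-z|)/|k+k₃-z|), which is strictly positive when q ≠ 0, given that Ω'(x)/x > 0 for all x > 0. -/
open RealInnerProductSpace

section

variable {E : Type*} [NormedAddCommGroup E] [InnerProductSpace ℝ E]

theorem inner_smul_sub_add_smul_of_inner_eq_zero {q w : E} (hqw : ⟪q, w⟫ = 0) (α a b : ℝ) :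
    ⟪q, a • (α • w + q - w) + b • (α • w + q)⟫ = ‖q‖ ^ 2 * (b + a) := by
  simp only [inner_add_right, inner_sub_right, inner_smul_right, hqw, real_inner_self_eq_norm_sq]
  ring

end

theorem stmt_1_general
    (Ω' : ℝ → ℝ)
    (hpos : ∀ x : ℝ, 0 < x → 0 < Ω' x / x)
    (k k₃ q : EuclideanSpace ℝ (Fin 3)) (α : ℝ)
    (hperp : ⟪q, k + k₃⟫ = 0)
    (z : EuclideanSpace ℝ (Fin 3)) (hz : z = α • (k + k₃) + q)
    (hz0 : z ≠ 0) (hzk : z ≠ k + k₃) :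
    ⟪q, (Ω' ‖k + k₃ - z‖ / ‖z - (k + k₃)‖) • (z - (k + k₃))
        + (Ω' ‖z‖ / ‖z‖) • z⟫
      = ‖q‖ ^ 2 * (Ω' ‖z‖ / ‖z‖ + Ω' ‖k + k₃ - z‖ / ‖k + k₃ - z‖) ∧
    (q ≠ 0 →
      0 < ⟪q, (Ω' ‖k + k₃ - z‖ / ‖z - (k + k₃)‖) • (z - (k + k₃))
            + (Ω' ‖z‖ / ‖z‖) • z⟫) := by
  have hgrad : ⟪q, (Ω' ‖k + k₃ - z‖ / ‖z - (k + k₃)‖) • (z - (k + k₃))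
        + (Ω' ‖z‖ / ‖z‖) • z⟫
      = ‖q‖ ^ 2 * (Ω' ‖z‖ / ‖z‖ + Ω' ‖k + k₃ - z‖ / ‖k + k₃ - z‖) := by
    rw [norm_sub_rev z, hz]
    exact inner_smul_sub_add_smul_of_inner_eq_zero hperp α _ _
  refine ⟨hgrad, fun hq => hgrad ▸ mul_pos (by positivity) (add_pos ?_ ?_)⟩
  · exact hpos _ (norm_pos_iff.2 hz0)
  · exact hpos _ (norm_pos_iff.2 (sub_ne_zero.2 hzk.symm))

/-- the directional derivative of the resonance function in an orthogonal
direction `q` equals `‖q‖²(Ω'(|z|)/|z| + Ω'(|k+k₃-z|)/|k+k₃-z|)`, strictly positive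
when `q ≠ 0`. -/
theorem stmt_1
    (Ω Ω' : ℝ → ℝ)
    (hΩ : ∀ x : ℝ, HasDerivAt Ω (Ω' x) x)
    (hpos : ∀ x : ℝ, 0 < x → 0 < Ω' x / x)
    (k k₃ q : EuclideanSpace ℝ (Fin 3)) (α : ℝ)
    (hperp : ⟪q, k + k₃⟫ = 0)
    (z : EuclideanSpace ℝ (Fin 3)) (hz : z = α • (k + k₃) + q)
    (hz0 : z ≠ 0) (hzk : z ≠ k + k₃) :
    ⟪q, (Ω' ‖k + k₃ - z‖ / ‖z - (k + k₃)‖) • (z - (k + k₃))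
        + (Ω' ‖z‖ / ‖z‖) • z⟫
      = ‖q‖ ^ 2 * (Ω' ‖z‖ / ‖z‖ + Ω' ‖k + k₃ - z‖ / ‖k + k₃ - z‖) ∧
    (q ≠ 0 →
      0 < ⟪q, (Ω' ‖k + k₃ - z‖ / ‖z - (k + k₃)‖) • (z - (k + k₃))
            + (Ω' ‖z‖ / ‖z‖) • z⟫) :=
  stmt_1_general Ω' hpos k k₃ q α hperp z hz hz0 hzk
end

section
/- For z_α = α(k+k₃) + q with ⟨q, k+k₃⟩ = 0 and |q| = r_α, where α ↦ z_α satisfies C(z_α) = 0 for all α in an open interval (with C as in the context), differentiating yields ∂_α |z_α|² = 2|k+k₃|² · (Ω'(|k+k₃-z_α|)/|k+k₃-z_α|) / (Ω'(|k+k₃-z_α|)/|k+k₃-z_α| + Ω'(|z_α|)/|z_α|). -/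
open RealInnerProductSpace Filter Topology

/-!
Write `s = k + k₃`. The decomposition says `⟪z_a, s⟫ = a ‖s‖²`, so `⟪z', s⟫ = ‖s‖²`. Since `C`
vanishes along the curve, `z'` is orthogonal to `∇C(z) = A (z - s) + B z`, where
`A = Ω'(|s - z|)/|s - z|` and `B = Ω'(|z|)/|z|` are positive. Hence
`(A + B) ⟪z, z'⟫ = A ‖s‖²`, and `∂_a ‖z_a‖² = 2 ⟪z, z'⟫`.
-/

section

variable {E : Type*} [NormedAddCommGroup E] [InnerProductSpace ℝ E]

theorem HasGradientAt.inner_eq_zero_of_eventually_comp_eq [CompleteSpace E] {f : E → ℝ}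
    {g z' : E} {z : ℝ → E} {α c : ℝ} (hf : HasGradientAt f g (z α)) (hz : HasDerivAt z z' α)
    (hc : ∀ᶠ a in 𝓝 α, f (z a) = c) : ⟪g, z'⟫ = 0 :=
  (hf.hasFDerivAt.comp_hasDerivAt α hz).unique ((hasDerivAt_const α c).congr_of_eventuallyEq hc)

theorem HasDerivAt.inner_eq_of_eventually_inner_eq_mul {z : ℝ → E} {z' s : E} {α c : ℝ}
    (hz : HasDerivAt z z' α) (h : ∀ᶠ a in 𝓝 α, ⟪z a, s⟫ = a * c) : ⟪z', s⟫ = c := by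
  have hinner : HasDerivAt (fun a => ⟪z a, s⟫) ⟪z', s⟫ α := by
    simpa using hz.inner ℝ (hasDerivAt_const α s)
  have hlin : HasDerivAt (fun a => ⟪z a, s⟫) c α := by
    simpa using ((hasDerivAt_id α).mul_const c).congr_of_eventuallyEq h
  exact hinner.unique hlin

theorem real_inner_eq_of_inner_smul_sub_add_smul_eq_zero {x s v : E} {A B : ℝ} (hAB : A + B ≠ 0)
    (hsv : ⟪s, v⟫ = ‖s‖ ^ 2) (h : ⟪A • (x - s) + B • x, v⟫ = 0) :
    ⟪x, v⟫ = ‖s‖ ^ 2 * (A / (A + B)) := by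
  rw [inner_add_left, real_inner_smul_left, real_inner_smul_left, inner_sub_left, hsv] at h
  field_simp
  linarith

end

theorem stmt_2_general
    (Ω' : ℝ → ℝ) (C₂ : ℝ) (hC₂ : 0 < C₂)
    (hlb : ∀ x : ℝ, 0 < x → C₂ ≤ Ω' x / x)
    (k k₃ : EuclideanSpace ℝ (Fin 3))
    (Cfun : EuclideanSpace ℝ (Fin 3) → ℝ)
    (hgrad : ∀ z, z ≠ 0 → z ≠ k + k₃ →
      HasGradientAt Cfun
        ((Ω' ‖k + k₃ - z‖ / ‖z - (k + k₃)‖) • (z - (k + k₃))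
          + (Ω' ‖z‖ / ‖z‖) • z) z)
    (I : Set ℝ) (hI : IsOpen I)
    (z : ℝ → EuclideanSpace ℝ (Fin 3)) (z' : ℝ → EuclideanSpace ℝ (Fin 3))
    (hzdiff : ∀ a ∈ I, HasDerivAt z (z' a) a)
    (hres : ∀ a ∈ I, Cfun (z a) = 0)
    (hdecomp : ∀ a ∈ I, ⟪z a - a • (k + k₃), k + k₃⟫ = 0)
    (hz0 : ∀ a ∈ I, z a ≠ 0) (hzk : ∀ a ∈ I, z a ≠ k + k₃)
    (α : ℝ) (hα : α ∈ I) :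
    HasDerivAt (fun a => ‖z a‖ ^ 2)
      (2 * ‖k + k₃‖ ^ 2 *
        ((Ω' ‖k + k₃ - z α‖ / ‖k + k₃ - z α‖) /
          (Ω' ‖k + k₃ - z α‖ / ‖k + k₃ - z α‖ + Ω' ‖z α‖ / ‖z α‖))) α := by
  set s := k + k₃
  have hz := hzdiff α hα
  have hI_nhds : ∀ᶠ a in 𝓝 α, a ∈ I := hI.mem_nhds hα
  have hA : 0 < Ω' ‖s - z α‖ / ‖s - z α‖ :=
    hC₂.trans_le (hlb _ (norm_sub_pos_iff.mpr (hzk α hα).symm))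
  have hB : 0 < Ω' ‖z α‖ / ‖z α‖ := hC₂.trans_le (hlb _ (norm_pos_iff.mpr (hz0 α hα)))
  have hzs : ⟪z' α, s⟫ = ‖s‖ ^ 2 := by
    refine hz.inner_eq_of_eventually_inner_eq_mul (hI_nhds.mono fun a ha => ?_)
    have h := hdecomp a ha
    rwa [inner_sub_left, real_inner_smul_left, real_inner_self_eq_norm_sq, sub_eq_zero] at h
  have hortho := (hgrad _ (hz0 α hα) (hzk α hα)).inner_eq_zero_of_eventually_comp_eq hz
    (hI_nhds.mono hres)
  rw [norm_sub_rev (z α)] at hortho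
  have hzz' := real_inner_eq_of_inner_smul_sub_add_smul_eq_zero (by positivity)
    (by rw [real_inner_comm, hzs]) hortho
  convert hz.norm_sq using 1
  rw [hzz']
  ring

/-- differentiating `C(z_α) = 0` along the resonant manifold yields the
formula for `∂_α |z_α|²`. -/
theorem stmt_2
    (Ω Ω' : ℝ → ℝ) (C₂ C₃ : ℝ) (hC₂ : 0 < C₂)
    (hΩ : ∀ x : ℝ, HasDerivAt Ω (Ω' x) x)
    (hlb : ∀ x : ℝ, 0 < x → C₂ ≤ Ω' x / x)
    (hub : ∀ x : ℝ, 0 < x → Ω' x / x ≤ C₃)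
    (k k₃ : EuclideanSpace ℝ (Fin 3)) (hkk₃ : k + k₃ ≠ 0)
    (Cfun : EuclideanSpace ℝ (Fin 3) → ℝ)
    (hCfun : ∀ z, Cfun z = Ω ‖k + k₃ - z‖ - Ω ‖k‖ - Ω ‖k₃‖ + Ω ‖z‖)
    (hgrad : ∀ z, z ≠ 0 → z ≠ k + k₃ →
      HasGradientAt Cfun
        ((Ω' ‖k + k₃ - z‖ / ‖z - (k + k₃)‖) • (z - (k + k₃))
          + (Ω' ‖z‖ / ‖z‖) • z) z)
    (I : Set ℝ) (hI : IsOpen I)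
    (z : ℝ → EuclideanSpace ℝ (Fin 3)) (z' : ℝ → EuclideanSpace ℝ (Fin 3))
    (hzdiff : ∀ a ∈ I, HasDerivAt z (z' a) a)
    (hres : ∀ a ∈ I, Cfun (z a) = 0)
    (hdecomp : ∀ a ∈ I, ⟪z a - a • (k + k₃), k + k₃⟫ = 0)
    (hz0 : ∀ a ∈ I, z a ≠ 0) (hzk : ∀ a ∈ I, z a ≠ k + k₃)
    (α : ℝ) (hα : α ∈ I) :
    HasDerivAt (fun a => ‖z a‖ ^ 2)
      (2 * ‖k + k₃‖ ^ 2 *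
        ((Ω' ‖k + k₃ - z α‖ / ‖k + k₃ - z α‖) /
          (Ω' ‖k + k₃ - z α‖ / ‖k + k₃ - z α‖ + Ω' ‖z α‖ / ‖z α‖))) α :=
  stmt_2_general Ω' C₂ hC₂ hlb k k₃ Cfun hgrad I hI z z' hzdiff hres hdecomp hz0 hzk α hα
end

section
/- With z_α = α(k+k₃) + q_α as a differentiable curve on the resonant manifold {C = 0} and r_α² = |z_α|² - α²|k+k₃|², one has ∂_α(r_α²) = 2|k+k₃|² · ((1-α)·A - α·B)/(A + B), where A = Ω'(|k+k₃-z_α|)/|k+k₃-z_α| and B = Ω'(|z_α|)/|z_α|. -/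
/-!
Differentiating `‖z a‖² - a²‖K‖²` (with `K = k + k₃`) gives `2⟪z α, z'⟫ - 2α‖K‖²`, so everything
reduces to computing `⟪z α, z'⟫`. Differentiating the constraint `⟪z a - a • K, K⟫ = 0` gives
`⟪z', K⟫ = ‖K‖²`, and differentiating the resonance condition `C (z a) = 0` gives
`⟪∇C, z'⟫ = 0`. Since `∇C (z α) = A • (z α - K) + B • z α`, the latter reads
`(A + B) ⟪z α, z'⟫ = A ‖K‖²`, and `A + B > 0` because `Ω'(x)/x ≥ C₂ > 0`.
-/

open RealInnerProductSpace Filter Topology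

section

variable {E : Type*} [NormedAddCommGroup E] [InnerProductSpace ℝ E]

theorem HasDerivAt.eq_zero_of_eventuallyEq_const {F : Type*} [NormedAddCommGroup F]
    [NormedSpace ℝ F] {f : ℝ → F} {f' : F} {a : ℝ} {c : F} (hf : HasDerivAt f f' a)
    (hc : ∀ᶠ t in 𝓝 a, f t = c) : f' = 0 :=
  hf.unique ((hasDerivAt_const a c).congr_of_eventuallyEq hc)

theorem inner_deriv_eq_norm_sq_of_eventually_inner_sub_smul_eq_zero {z : ℝ → E} {z' K : E}
    {a : ℝ} (hz : HasDerivAt z z' a) (hdecomp : ∀ᶠ t in 𝓝 a, ⟪z t - t • K, K⟫ = 0) :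
    ⟪z', K⟫ = ‖K‖ ^ 2 := by
  have hderiv : HasDerivAt (fun t => ⟪z t - t • K, K⟫) ⟪z' - K, K⟫ a := by
    simpa using (hz.sub ((hasDerivAt_id a).smul_const K)).inner ℝ (hasDerivAt_const a K)
  have hzero := hderiv.eq_zero_of_eventuallyEq_const hdecomp
  rw [inner_sub_left, real_inner_self_eq_norm_sq] at hzero
  linarith

theorem inner_gradient_deriv_eq_zero_of_eventually_eq_const [CompleteSpace E] {f : E → ℝ}
    {g : E} {z : ℝ → E} {z' : E} {a c : ℝ} (hf : HasGradientAt f g (z a))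
    (hz : HasDerivAt z z' a) (hc : ∀ᶠ t in 𝓝 a, f (z t) = c) : ⟪g, z'⟫ = 0 := by
  have hchain : HasDerivAt (fun t => f (z t)) ⟪g, z'⟫ a := by
    have := hf.hasFDerivAt.comp_hasDerivAt a hz
    rwa [InnerProductSpace.toDual_apply_apply] at this
  exact hchain.eq_zero_of_eventuallyEq_const hc

theorem inner_deriv_eq_of_hasGradientAt_weighted [CompleteSpace E] {f : E → ℝ} {z : ℝ → E}
    {z' K : E} {a c A B : ℝ} (hAB : A + B ≠ 0)
    (hf : HasGradientAt f (A • (z a - K) + B • z a) (z a)) (hz : HasDerivAt z z' a)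
    (hc : ∀ᶠ t in 𝓝 a, f (z t) = c) (hdecomp : ∀ᶠ t in 𝓝 a, ⟪z t - t • K, K⟫ = 0) :
    ⟪z a, z'⟫ = A * ‖K‖ ^ 2 / (A + B) := by
  have hK : ⟪K, z'⟫ = ‖K‖ ^ 2 := by
    rw [real_inner_comm]
    exact inner_deriv_eq_norm_sq_of_eventually_inner_sub_smul_eq_zero hz hdecomp
  have hlevel := inner_gradient_deriv_eq_zero_of_eventually_eq_const hf hz hc
  rw [inner_add_left, real_inner_smul_left, real_inner_smul_left, inner_sub_left, hK] at hlevel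
  rw [eq_div_iff hAB]
  linear_combination hlevel

end

theorem stmt_3_general
    (Ω' : ℝ → ℝ) (C₂ : ℝ) (hC₂ : 0 < C₂)
    (hlb : ∀ x : ℝ, 0 < x → C₂ ≤ Ω' x / x)
    (k k₃ : EuclideanSpace ℝ (Fin 3))
    (Cfun : EuclideanSpace ℝ (Fin 3) → ℝ)
    (hgrad : ∀ z, z ≠ 0 → z ≠ k + k₃ →
      HasGradientAt Cfun
        ((Ω' ‖k + k₃ - z‖ / ‖z - (k + k₃)‖) • (z - (k + k₃))
          + (Ω' ‖z‖ / ‖z‖) • z) z)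
    (I : Set ℝ) (hI : IsOpen I)
    (z : ℝ → EuclideanSpace ℝ (Fin 3)) (z' : ℝ → EuclideanSpace ℝ (Fin 3))
    (hzdiff : ∀ a ∈ I, HasDerivAt z (z' a) a)
    (hres : ∀ a ∈ I, Cfun (z a) = 0)
    (hdecomp : ∀ a ∈ I, ⟪z a - a • (k + k₃), k + k₃⟫ = 0)
    (hz0 : ∀ a ∈ I, z a ≠ 0) (hzk : ∀ a ∈ I, z a ≠ k + k₃)
    (α : ℝ) (hα : α ∈ I)
    (A B : ℝ)
    (hA : A = Ω' ‖k + k₃ - z α‖ / ‖k + k₃ - z α‖)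
    (hB : B = Ω' ‖z α‖ / ‖z α‖) :
    HasDerivAt (fun a => ‖z a‖ ^ 2 - a ^ 2 * ‖k + k₃‖ ^ 2)
      (2 * ‖k + k₃‖ ^ 2 * (((1 - α) * A - α * B) / (A + B))) α := by
  have hnhds : I ∈ 𝓝 α := hI.mem_nhds hα
  have hzd := hzdiff α hα
  have hApos : 0 < A := by
    rw [hA]
    exact hC₂.trans_le (hlb _ (norm_pos_iff.mpr (sub_ne_zero.mpr (hzk α hα).symm)))
  have hBpos : 0 < B := by
    rw [hB]
    exact hC₂.trans_le (hlb _ (norm_pos_iff.mpr (hz0 α hα)))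
  have hgradα := hgrad (z α) (hz0 α hα) (hzk α hα)
  rw [norm_sub_rev (z α), ← hA, ← hB] at hgradα
  have hinner := inner_deriv_eq_of_hasGradientAt_weighted (add_pos hApos hBpos).ne' hgradα hzd
    (eventually_of_mem hnhds hres) (eventually_of_mem hnhds hdecomp)
  refine (hzd.norm_sq.sub ((hasDerivAt_pow 2 α).mul_const (‖k + k₃‖ ^ 2))).congr_deriv ?_
  rw [hinner]
  field_simp
  ring

/-- the derivative of `r_α² = |z_α|² - α²|k+k₃|²` along the resonant
manifold. -/
theorem stmt_3
    (Ω Ω' : ℝ → ℝ) (C₂ C₃ : ℝ) (hC₂ : 0 < C₂)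
    (hΩ : ∀ x : ℝ, HasDerivAt Ω (Ω' x) x)
    (hlb : ∀ x : ℝ, 0 < x → C₂ ≤ Ω' x / x)
    (hub : ∀ x : ℝ, 0 < x → Ω' x / x ≤ C₃)
    (k k₃ : EuclideanSpace ℝ (Fin 3)) (hkk₃ : k + k₃ ≠ 0)
    (Cfun : EuclideanSpace ℝ (Fin 3) → ℝ)
    (hCfun : ∀ z, Cfun z = Ω ‖k + k₃ - z‖ - Ω ‖k‖ - Ω ‖k₃‖ + Ω ‖z‖)
    (hgrad : ∀ z, z ≠ 0 → z ≠ k + k₃ →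
      HasGradientAt Cfun
        ((Ω' ‖k + k₃ - z‖ / ‖z - (k + k₃)‖) • (z - (k + k₃))
          + (Ω' ‖z‖ / ‖z‖) • z) z)
    (I : Set ℝ) (hI : IsOpen I)
    (z : ℝ → EuclideanSpace ℝ (Fin 3)) (z' : ℝ → EuclideanSpace ℝ (Fin 3))
    (hzdiff : ∀ a ∈ I, HasDerivAt z (z' a) a)
    (hres : ∀ a ∈ I, Cfun (z a) = 0)
    (hdecomp : ∀ a ∈ I, ⟪z a - a • (k + k₃), k + k₃⟫ = 0)
    (hz0 : ∀ a ∈ I, z a ≠ 0) (hzk : ∀ a ∈ I, z a ≠ k + k₃)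
    (α : ℝ) (hα : α ∈ I)
    (A B : ℝ)
    (hA : A = Ω' ‖k + k₃ - z α‖ / ‖k + k₃ - z α‖)
    (hB : B = Ω' ‖z α‖ / ‖z α‖) :
    HasDerivAt (fun a => ‖z a‖ ^ 2 - a ^ 2 * ‖k + k₃‖ ^ 2)
      (2 * ‖k + k₃‖ ^ 2 * (((1 - α) * A - α * B) / (A + B))) α :=
  stmt_3_general Ω' C₂ hC₂ hlb k k₃ Cfun hgrad I hI z z' hzdiff hres hdecomp hz0 hzk α hα A B hA hB
end
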